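/- arXiv:2210.09522 — 2 statements merged into one kernel-verified Lean document; each statement's English description precedes it below -/
import Mathlib

section
/- Let d ≥ 3 and let κ_d = π^{d/2}/Γ(d/2 + 1) denote the volume of the d-dimensional unit ball. For every 0 < r ≤ R there exists a family of at least (R/r)^{d−2} axis-parallel cubes of side length (κ_d r^{d−2} R²)^{1/d}, with pairwise disjoint interiors, all contained in the closed ball centered at the origin of radius R(1 + √d · κ_d^{1/d} · (r^{d−2}/R^{d−2})^{1/d}). -/
/-!
Tile space by the grid of cubes `ℓ(a + [0,1]^d)`, `a ∈ ℤ^d`, and keep the cubes that meet the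
ball of radius `R`. They have disjoint interiors and cover the ball, so there are at least
`κ_d R^d / ℓ^d` of them, and each lies in the ball of radius `R + √d ℓ` because a cube has
diameter `√d ℓ`. The side length `ℓ = (κ_d r^{d-2} R²)^{1/d}` turns these two bounds into the
claimed ones.
-/

open Metric Set

/-- The volume `κ_d = π^{d/2}/Γ(d/2+1)` of the unit ball in `ℝ^d`. -/
noncomputable def unitBallVolume (d : ℕ) : ℝ :=
  Real.pi ^ ((d : ℝ) / 2) / Real.Gamma ((d : ℝ) / 2 + 1)

/-- The axis-parallel cube `z + [0,ℓ]^d` in `ℝ^d`. -/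
def axisCube (d : ℕ) (z : EuclideanSpace ℝ (Fin d)) (ℓ : ℝ) : Set (EuclideanSpace ℝ (Fin d)) :=
  {x | ∀ i, x i ∈ Set.Icc (z i) (z i + ℓ)}

open MeasureTheory

section

variable {d : ℕ}

lemma unitBallVolume_pos (d : ℕ) : 0 < unitBallVolume d :=
  div_pos (Real.rpow_pos_of_pos Real.pi_pos _) (Real.Gamma_pos_of_pos (by positivity))

lemma volume_closedBall_eq_unitBallVolume [NeZero d] (x : EuclideanSpace ℝ (Fin d)) {R : ℝ}
    (hR : 0 ≤ R) : volume (closedBall x R) = ENNReal.ofReal (unitBallVolume d * R ^ d) := by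
  have hpi : Real.sqrt Real.pi ^ d = Real.pi ^ ((d : ℝ) / 2) := by
    rw [Real.sqrt_eq_rpow, ← Real.rpow_mul_natCast Real.pi_pos.le]
    ring_nf
  rw [EuclideanSpace.volume_closedBall, Fintype.card_fin, hpi, ← ENNReal.ofReal_pow hR,
    ← ENNReal.ofReal_mul (by positivity), mul_comm]
  rfl

namespace axisCube

lemma eq_preimage_pi (z : EuclideanSpace ℝ (Fin d)) (ℓ : ℝ) :
    axisCube d z ℓ = (WithLp.ofLp : EuclideanSpace ℝ (Fin d) → _) ⁻¹'
      Set.pi univ fun i => Icc (z i) (z i + ℓ) := by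
  ext x
  simp [axisCube, Pi.le_def, forall_and]

lemma volume_eq (z : EuclideanSpace ℝ (Fin d)) {ℓ : ℝ} (hℓ : 0 ≤ ℓ) :
    volume (axisCube d z ℓ) = ENNReal.ofReal (ℓ ^ d) := by
  rw [eq_preimage_pi, ← MeasurableEquiv.coe_toLp_symm,
    (EuclideanSpace.volume_preserving_symm_measurableEquiv_toLp (Fin d)).measure_preimage
      (MeasurableSet.univ_pi fun i => measurableSet_Icc).nullMeasurableSet,
    volume_pi_pi]
  simp [Real.volume_Icc, ← ENNReal.ofReal_pow hℓ]

lemma interior_subset (z : EuclideanSpace ℝ (Fin d)) (ℓ : ℝ) :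
    interior (axisCube d z ℓ) ⊆ {x | ∀ i, x i ∈ Ioo (z i) (z i + ℓ)} := by
  rw [eq_preimage_pi, ← PiLp.coe_continuousLinearEquiv 2 ℝ,
    ← ContinuousLinearEquiv.coe_toHomeomorph, ← Homeomorph.preimage_interior,
    interior_pi_set finite_univ]
  intro x hx i
  simpa using hx i (mem_univ i)

lemma dist_le {z x y : EuclideanSpace ℝ (Fin d)} {ℓ : ℝ} (hℓ : 0 ≤ ℓ)
    (hx : x ∈ axisCube d z ℓ) (hy : y ∈ axisCube d z ℓ) : dist x y ≤ Real.sqrt d * ℓ := by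
  have hcoord (i : Fin d) : dist (x i) (y i) ^ 2 ≤ ℓ ^ 2 := by
    obtain ⟨hx₁, hx₂⟩ := hx i
    obtain ⟨hy₁, hy₂⟩ := hy i
    rw [Real.dist_eq, sq_abs]
    nlinarith
  calc dist x y = Real.sqrt (∑ i, dist (x i) (y i) ^ 2) := EuclideanSpace.dist_eq x y
    _ ≤ Real.sqrt (∑ _i : Fin d, ℓ ^ 2) := Real.sqrt_le_sqrt (Finset.sum_le_sum fun i _ => hcoord i)
    _ = Real.sqrt d * ℓ := by simp [Real.sqrt_mul, Real.sqrt_sq hℓ]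

lemma subset_closedBall {z x c : EuclideanSpace ℝ (Fin d)} {ℓ R : ℝ} (hℓ : 0 ≤ ℓ)
    (hx : x ∈ axisCube d z ℓ) (hxc : x ∈ closedBall c R) :
    axisCube d z ℓ ⊆ closedBall c (R + Real.sqrt d * ℓ) := fun y hy =>
  calc dist y c ≤ dist y x + dist x c := dist_triangle y x c
    _ ≤ Real.sqrt d * ℓ + R := add_le_add (dist_le hℓ hy hx) hxc
    _ = R + Real.sqrt d * ℓ := add_comm _ _

end axisCube

lemma unitBallVolume_mul_pow_le_of_subset_iUnion_axisCube [NeZero d] {ι : Type*} [Fintype ι]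
    {z : ι → EuclideanSpace ℝ (Fin d)} {x : EuclideanSpace ℝ (Fin d)} {ℓ R : ℝ}
    (hℓ : 0 ≤ ℓ) (hR : 0 ≤ R) (hcover : closedBall x R ⊆ ⋃ i, axisCube d (z i) ℓ) :
    unitBallVolume d * R ^ d ≤ Fintype.card ι * ℓ ^ d := by
  have hvol := (measure_mono hcover).trans (measure_iUnion_fintype_le volume _)
  simp only [volume_closedBall_eq_unitBallVolume x hR, axisCube.volume_eq _ hℓ,
    Finset.sum_const, Finset.card_univ, nsmul_eq_mul] at hvol
  rwa [← ENNReal.ofReal_natCast, ← ENNReal.ofReal_mul (Nat.cast_nonneg _),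
    ENNReal.ofReal_le_ofReal_iff (by positivity)] at hvol

def gridPoint (ℓ : ℝ) (a : Fin d → ℤ) : EuclideanSpace ℝ (Fin d) :=
  WithLp.toLp 2 fun i => ℓ * a i

noncomputable def gridIndex (ℓ : ℝ) (x : EuclideanSpace ℝ (Fin d)) : Fin d → ℤ :=
  fun i => ⌊x i / ℓ⌋

lemma mem_axisCube_gridPoint_gridIndex {ℓ : ℝ} (hℓ : 0 < ℓ) (x : EuclideanSpace ℝ (Fin d)) :
    x ∈ axisCube d (gridPoint ℓ (gridIndex ℓ x)) ℓ := by
  intro i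
  have h₁ := mul_le_mul_of_nonneg_left (Int.floor_le (x i / ℓ)) hℓ.le
  have h₂ := mul_lt_mul_of_pos_left (Int.lt_floor_add_one (x i / ℓ)) hℓ
  rw [mul_div_cancel₀ _ hℓ.ne'] at h₁ h₂
  exact ⟨h₁, by simp only [gridPoint, gridIndex]; linarith⟩

lemma disjoint_interior_axisCube_gridPoint {ℓ : ℝ} {a b : Fin d → ℤ} (hab : a ≠ b) :
    Disjoint (interior (axisCube d (gridPoint ℓ a) ℓ))
      (interior (axisCube d (gridPoint ℓ b) ℓ)) := by
  refine .mono (axisCube.interior_subset _ _) (axisCube.interior_subset _ _) ?_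
  obtain ⟨i, hi⟩ := Function.ne_iff.mp hab
  rw [disjoint_left]
  intro x hxa hxb
  obtain ⟨ha₁, ha₂⟩ := hxa i
  obtain ⟨hb₁, hb₂⟩ := hxb i
  simp only [gridPoint] at ha₁ ha₂ hb₁ hb₂
  rcases hi.lt_or_gt with h | h
  · have h' : (a i : ℝ) + 1 ≤ b i := by exact_mod_cast h
    nlinarith
  · have h' : (b i : ℝ) + 1 ≤ a i := by exact_mod_cast h
    nlinarith

lemma finite_image_gridIndex {K : Set (EuclideanSpace ℝ (Fin d))} (hK : Bornology.IsBounded K)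
    (ℓ : ℝ) : (gridIndex ℓ '' K).Finite := by
  obtain ⟨R, hR⟩ := hK.subset_closedBall 0
  refine (Set.Finite.pi fun _ => finite_Icc ⌊-(R / |ℓ|)⌋ ⌊R / |ℓ|⌋).subset ?_
  rintro _ ⟨x, hx, rfl⟩ i -
  have hxi : |x i / ℓ| ≤ R / |ℓ| := by
    rw [abs_div]
    gcongr
    exact (PiLp.norm_apply_le x i).trans (mem_closedBall_zero_iff.mp (hR hx))
  exact ⟨Int.floor_mono (neg_le_of_abs_le hxi), Int.floor_mono (le_of_abs_le hxi)⟩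

theorem exists_axisCube_packing [NeZero d] {ℓ R : ℝ} (hℓ : 0 < ℓ) (hR : 0 ≤ R) :
    ∃ (N : ℕ) (z : Fin N → EuclideanSpace ℝ (Fin d)),
      unitBallVolume d * R ^ d ≤ N * ℓ ^ d ∧
      (∀ n, axisCube d (z n) ℓ ⊆ closedBall 0 (R + Real.sqrt d * ℓ)) ∧
      Pairwise fun m n => Disjoint (interior (axisCube d (z m) ℓ)) (interior (axisCube d (z n) ℓ))
    := by
  set S := gridIndex ℓ '' closedBall (0 : EuclideanSpace ℝ (Fin d)) R
  have : Finite S := (finite_image_gridIndex isBounded_closedBall ℓ).to_subtype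
  obtain ⟨N, ⟨e⟩⟩ := Finite.exists_equiv_fin S
  refine ⟨N, fun n => gridPoint ℓ (e.symm n), ?_, fun n => ?_, fun m n hmn => ?_⟩
  · have hcover : closedBall 0 R ⊆ ⋃ n, axisCube d (gridPoint ℓ (e.symm n)) ℓ := fun x hx =>
      mem_iUnion.mpr ⟨e ⟨gridIndex ℓ x, x, hx, rfl⟩, by
        simpa using mem_axisCube_gridPoint_gridIndex hℓ x⟩
    simpa using unitBallVolume_mul_pow_le_of_subset_iUnion_axisCube hℓ.le hR hcover
  · obtain ⟨x, hx, hxn⟩ := (e.symm n).2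
    have hxz := mem_axisCube_gridPoint_gridIndex hℓ x
    rw [hxn] at hxz
    exact axisCube.subset_closedBall hℓ.le hxz hx
  · exact disjoint_interior_axisCube_gridPoint
      (Subtype.coe_injective.ne (e.symm.injective.ne hmn))

lemma rpow_one_div_mul_pow_sub_two_mul_sq {κ r R : ℝ} (hd : 2 ≤ d) (hκ : 0 ≤ κ) (hr : 0 ≤ r)
    (hR : 0 < R) :
    (κ * r ^ (d - 2) * R ^ 2) ^ ((1 : ℝ) / d) =
      R * (κ ^ ((1 : ℝ) / d) * (r ^ (d - 2) / R ^ (d - 2)) ^ ((1 : ℝ) / d)) := by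
  have hsplit : κ * r ^ (d - 2) * R ^ 2 = R ^ d * (κ * (r ^ (d - 2) / R ^ (d - 2))) := by
    rw [← Nat.sub_add_cancel hd, pow_add]
    field_simp
    simp
  rw [hsplit, Real.mul_rpow (by positivity) (by positivity), Real.mul_rpow hκ (by positivity),
    one_div, Real.pow_rpow_inv_natCast hR.le (by omega)]

end

/-- **Packing lemma.** For `d ≥ 3` and `0 < r ≤ R` one can pack at least `(R/r)^{d-2}`
axis-parallel cubes of side length `(κ_d r^{d-2} R²)^{1/d}` with pairwise disjoint interiors
into the closed ball centered at the origin of radius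
`R(1 + √d κ_d^{1/d} (r^{d-2}/R^{d-2})^{1/d})`. -/
theorem cube_packing (d : ℕ) (hd : 3 ≤ d) (r R : ℝ) (hr : 0 < r) (hrR : r ≤ R) :
    ∃ (N : ℕ) (z : Fin N → EuclideanSpace ℝ (Fin d)),
      ((R / r) ^ (d - 2) : ℝ) ≤ (N : ℝ) ∧
      (∀ n : Fin N,
        axisCube d (z n) ((unitBallVolume d * r ^ (d - 2) * R ^ 2) ^ ((1 : ℝ) / d)) ⊆
          closedBall (0 : EuclideanSpace ℝ (Fin d))
            (R * (1 + Real.sqrt d * unitBallVolume d ^ ((1 : ℝ) / d) *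
              (r ^ (d - 2) / R ^ (d - 2)) ^ ((1 : ℝ) / d)))) ∧
      Pairwise (fun m n : Fin N =>
        Disjoint
          (interior (axisCube d (z m) ((unitBallVolume d * r ^ (d - 2) * R ^ 2) ^ ((1 : ℝ) / d))))
          (interior (axisCube d (z n) ((unitBallVolume d * r ^ (d - 2) * R ^ 2) ^ ((1 : ℝ) / d)))))
    := by
  have : NeZero d := ⟨by omega⟩
  have hR : 0 < R := hr.trans_le hrR
  have hκ := unitBallVolume_pos d
  set ℓ := (unitBallVolume d * r ^ (d - 2) * R ^ 2) ^ ((1 : ℝ) / d)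
  have hℓd : ℓ ^ d = unitBallVolume d * r ^ (d - 2) * R ^ 2 := by
    simp only [ℓ, one_div]
    exact Real.rpow_inv_natCast_pow (by positivity) (NeZero.ne d)
  have hradius : R * (1 + Real.sqrt d * unitBallVolume d ^ ((1 : ℝ) / d) *
      (r ^ (d - 2) / R ^ (d - 2)) ^ ((1 : ℝ) / d)) = R + Real.sqrt d * ℓ := by
    rw [show ℓ = _ from rpow_one_div_mul_pow_sub_two_mul_sq (by omega) hκ.le hr.le hR]
    ring
  obtain ⟨N, z, hcount, hsubset, hdisjoint⟩ := exists_axisCube_packing (d := d)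
    (Real.rpow_pos_of_pos (by positivity) _ : 0 < ℓ) hR.le
  refine ⟨N, z, ?_, hradius ▸ hsubset, hdisjoint⟩
  have hRd : R ^ d = R ^ (d - 2) * R ^ 2 := by rw [← pow_add, Nat.sub_add_cancel (by omega)]
  rw [hℓd, hRd] at hcount
  rw [div_pow, div_le_iff₀ (by positivity)]
  nlinarith [mul_pos hκ (pow_pos hR 2)]
end

section
/- Let d ≥ 3 and let Ω be a continuous function on S^{d−1} with ∫_{S^{d−1}} Ω dσ = 0 that does not vanish identically; set K(x) = Ω(x/|x|)/|x|^{d−2}. Then there exist z₀ ∈ B(0,1), radii 0 < s < t, and a constant c > 0 such that | ∫_{B(0,1) ∩ (B(z₀,t) \ B(z₀,s))} K(z₀ − ζ) dm_d(ζ) | ≥ c. -/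
/-!
In polar coordinates the weight `r ^ (d - 1)` cancels the factor `r ^ (-(d - 2))` of the kernel,
so the integral of `K` over a centred annulus `s ≤ |x| < t` is `(t² - s²) / 2 · ∫ Ω`.
If `∫ Ω ≠ 0`, a centred annulus inside the unit ball already works. Otherwise the integral of
`K (z₀ - ·)` over every annulus around `z₀` vanishes, so its part inside `B(0, 1)` is minus its
part outside. Take `Ω ξ₀ ≠ 0`, `z₀ = -(3/4) ξ₀` and the thin annulus `1/4 ≤ |z₀ - ζ| < t`: the
points of it outside the unit ball see `z₀` from directions close to `ξ₀`, where by continuity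
`Ω` keeps the sign of `Ω ξ₀` and half its size, and they form a set of positive measure.
-/

open MeasureTheory Metric Set Module RealInnerProductSpace

theorem sq_div_two_le_mul_of_abs_sub_lt {a b : ℝ} (h : |b - a| < |a| / 2) :
    a ^ 2 / 2 ≤ a * b := by
  have := abs_le.1 (abs_mul a (b - a)).le
  nlinarith [abs_nonneg a, abs_mul_abs_self a, abs_nonneg (b - a)]

theorem integral_pow_mul_indicator_inv_pow {n : ℕ} (hn : 2 ≤ n) {s t : ℝ} (hs : 0 < s)
    (hst : s ≤ t) :
    ∫ r in Ioi 0, r ^ (n - 1) * (Ico s t).indicator (fun r => (r ^ (n - 2))⁻¹) r =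
      (t ^ 2 - s ^ 2) / 2 := by
  have hpow : ∀ r : ℝ, r ≠ 0 → r ^ (n - 1) * (r ^ (n - 2))⁻¹ = r := fun r hr => by
    rw [show n - 1 = n - 2 + 1 by omega, pow_succ, mul_right_comm,
      mul_inv_cancel₀ (pow_ne_zero _ hr), one_mul]
  calc
    _ = ∫ r in Ioi 0, (Ico s t).indicator id r := by
      refine setIntegral_congr_fun measurableSet_Ioi fun r (hr : 0 < r) => ?_
      by_cases hrst : r ∈ Ico s t
      · simp [hrst, hpow r hr.ne']
      · simp [hrst]
    _ = ∫ r in s..t, r := by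
      rw [setIntegral_indicator measurableSet_Ico,
        inter_eq_self_of_subset_right (s := Ioi 0) fun r hr => hs.trans_le hr.1,
        setIntegral_congr_set Ico_ae_eq_Ioc, intervalIntegral.integral_of_le hst]
      rfl
    _ = (t ^ 2 - s ^ 2) / 2 := integral_id

theorem le_abs_setIntegral_sdiff_of_setIntegral_eq_zero {X : Type*} [MeasurableSpace X]
    {μ : Measure X} {f : X → ℝ} {A R : Set X} (hR : MeasurableSet R) (hRA : R ⊆ A)
    (hμR : μ R ≠ ⊤) (hf : IntegrableOn f A μ) (h0 : ∫ x in A, f x ∂μ = 0) {κ : ℝ}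
    (hκ : ∀ x ∈ R, κ ≤ f x) :
    κ * μ.real R ≤ |∫ x in A \ R, f x ∂μ| := by
  rw [setIntegral_sdiff hR hf hRA, h0, zero_sub, abs_neg]
  exact (setIntegral_ge_of_const_le_real hR hμR hκ (hf.mono_set hRA)).trans (le_abs_self _)

section NormedSpace

variable {E : Type*} [NormedAddCommGroup E] [NormedSpace ℝ E]

noncomputable def homogeneousKernel (Ω : E → ℝ) (k : ℕ) (x : E) : ℝ :=
  Ω (‖x‖⁻¹ • x) / ‖x‖ ^ k

theorem continuousOn_homogeneousKernel {Ω : E → ℝ} (hΩ : ContinuousOn Ω (sphere 0 1)) (k : ℕ) :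
    ContinuousOn (homogeneousKernel Ω k) {0}ᶜ := by
  have hnorm : ∀ x ∈ ({0}ᶜ : Set E), ‖x‖ ≠ 0 := fun x hx => norm_ne_zero_iff.2 hx
  refine ContinuousOn.div
    (hΩ.comp ((continuous_norm.continuousOn.inv₀ hnorm).smul continuousOn_id) fun x hx => ?_)
    (continuous_norm.pow k).continuousOn fun x hx => pow_ne_zero k (hnorm x hx)
  simp [norm_smul, hnorm x hx]

variable [MeasurableSpace E] (μ : Measure E) [μ.IsAddHaarMeasure]

theorem measure_ball_diff_ball_diff_ball_pos {ξ : E} (hξ : ‖ξ‖ = 1) {a s t : ℝ} (hs : 0 ≤ s)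
    (hst : s < t) (h1 : 1 < a + (s + t) / 2) :
    0 < μ ((ball (-a • ξ) t \ ball (-a • ξ) s) \ ball 0 1) := by
  have hU : IsOpen ((ball (-a • ξ) t \ closedBall (-a • ξ) s) ∩ {w | 1 < ‖w‖}) :=
    (isOpen_ball.sdiff isClosed_closedBall).inter (isOpen_lt continuous_const continuous_norm)
  have hy : -(a + (s + t) / 2) • ξ ∈
      (ball (-a • ξ) t \ closedBall (-a • ξ) s) ∩ {w | 1 < ‖w‖} := by
    have hdist : dist (-(a + (s + t) / 2) • ξ) (-a • ξ) = (s + t) / 2 := by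
      rw [dist_eq_norm, ← sub_smul, norm_smul, hξ, mul_one, Real.norm_eq_abs]
      rw [abs_of_neg] <;> linarith
    refine ⟨⟨?_, ?_⟩, ?_⟩
    · rw [mem_ball, hdist]; linarith
    · rw [mem_closedBall, hdist, not_le]; linarith
    · rw [mem_ofPred_eq, norm_smul, hξ, mul_one, Real.norm_eq_abs, abs_neg, abs_of_pos] <;>
        linarith
  refine (hU.measure_pos μ ⟨_, hy⟩).trans_le (measure_mono ?_)
  rintro w ⟨⟨hwt, hws⟩, hw1⟩
  exact ⟨⟨hwt, fun h => hws (ball_subset_closedBall h)⟩,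
    fun h => (mem_ball_zero_iff.1 h).not_gt hw1⟩

variable [BorelSpace E] [FiniteDimensional ℝ E]

theorem setIntegral_ball_diff_ball_comp_sub_left (f : E → ℝ) (z : E) (s t : ℝ) :
    ∫ ζ in ball z t \ ball z s, f (z - ζ) ∂μ = ∫ x in ball 0 t \ ball 0 s, f x ∂μ := by
  have h := (μ.measurePreserving_sub_left z).setIntegral_preimage_emb
    (Homeomorph.subLeft z).measurableEmbedding f (ball 0 t \ ball 0 s)
  have hpre : (fun ζ => z - ζ) ⁻¹' (ball 0 t \ ball 0 s) = ball z t \ ball z s := by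
    ext ζ
    simp [dist_eq_norm, norm_sub_rev z ζ]
  rwa [hpre] at h

theorem integrableOn_ball_diff_ball_homogeneousKernel_comp_sub_left {Ω : E → ℝ}
    (hΩ : ContinuousOn Ω (sphere 0 1)) (k : ℕ) (z : E) {s : ℝ} (hs : 0 < s) (t : ℝ) :
    IntegrableOn (fun ζ => homogeneousKernel Ω k (z - ζ)) (ball z t \ ball z s) μ := by
  refine ContinuousOn.integrableOn_compact ((isCompact_closedBall z t).diff isOpen_ball)
    ((continuousOn_homogeneousKernel hΩ k).comp (continuous_sub_left z).continuousOn ?_)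
    |>.mono_set (sdiff_subset_sdiff_left ball_subset_closedBall)
  rintro ζ ⟨-, hζ⟩ h0
  rw [mem_singleton_iff, sub_eq_zero] at h0
  exact hζ (h0 ▸ mem_ball_self hs)

theorem integral_comp_inv_norm_smul_mul [Nontrivial E] (Ω : E → ℝ) (φ : ℝ → ℝ) :
    ∫ x, Ω (‖x‖⁻¹ • x) * φ ‖x‖ ∂μ =
      (∫ ω, Ω ω ∂μ.toSphere) * ∫ r in Ioi 0, r ^ (finrank ℝ E - 1) * φ r :=
  calc
    ∫ x, Ω (‖x‖⁻¹ • x) * φ ‖x‖ ∂μ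
      = ∫ x : ({0}ᶜ : Set E), Ω (‖x.1‖⁻¹ • x.1) * φ ‖x.1‖ ∂(μ.comap (↑)) := by
      rw [integral_subtype_comap (measurableSet_singleton _).compl
        (fun x => Ω (‖x‖⁻¹ • x) * φ ‖x‖), restrict_compl_singleton]
    _ = ∫ y, Ω y.1 * φ y.2 ∂μ.toSphere.prod (.volumeIoiPow (finrank ℝ E - 1)) := by
      simpa using μ.measurePreserving_homeomorphUnitSphereProd.integral_comp
        (Homeomorph.measurableEmbedding _) (fun y => Ω y.1 * φ y.2)
    _ = (∫ ω, Ω ω ∂μ.toSphere) * ∫ r : Ioi (0 : ℝ), φ r ∂.volumeIoiPow (finrank ℝ E - 1) :=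
      integral_prod_mul (fun ω : sphere (0 : E) 1 => Ω ω) (fun r : Ioi (0 : ℝ) => φ r)
    _ = _ := by
      simp only [Measure.volumeIoiPow, ENNReal.ofReal]
      rw [integral_withDensity_eq_integral_smul
          (measurable_subtype_coe.pow_const _).real_toNNReal,
        integral_subtype_comap measurableSet_Ioi
          fun r => Real.toNNReal (r ^ (finrank ℝ E - 1)) • φ r]
      congr 1
      refine setIntegral_congr_fun measurableSet_Ioi fun r hr => ?_
      rw [NNReal.smul_def, Real.coe_toNNReal _ (pow_nonneg hr.out.le _), smul_eq_mul]

theorem setIntegral_ball_diff_ball_homogeneousKernel (h2 : 2 ≤ finrank ℝ E) (Ω : E → ℝ)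
    {s t : ℝ} (hs : 0 < s) (hst : s ≤ t) :
    ∫ x in ball 0 t \ ball 0 s, homogeneousKernel Ω (finrank ℝ E - 2) x ∂μ =
      (t ^ 2 - s ^ 2) / 2 * ∫ ω, Ω ω ∂μ.toSphere := by
  have : Nontrivial E := Module.nontrivial_of_finrank_pos (R := ℝ) (by omega)
  have hind : (ball 0 t \ ball 0 s).indicator (homogeneousKernel Ω (finrank ℝ E - 2)) =
      fun x => Ω (‖x‖⁻¹ • x) * (Ico s t).indicator (fun r => (r ^ (finrank ℝ E - 2))⁻¹) ‖x‖ := by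
    ext x
    have hmem : x ∈ ball 0 t \ ball 0 s ↔ ‖x‖ ∈ Ico s t := by
      simp [and_comm]
    by_cases hx : ‖x‖ ∈ Ico s t
    · rw [indicator_of_mem (hmem.2 hx), indicator_of_mem hx, homogeneousKernel, div_eq_mul_inv]
    · rw [indicator_of_notMem (mt hmem.1 hx), indicator_of_notMem hx, mul_zero]
  rw [← integral_indicator (measurableSet_ball.diff measurableSet_ball), hind,
    integral_comp_inv_norm_smul_mul, integral_pow_mul_indicator_inv_pow h2 hs hst, mul_comm]

end NormedSpace

section InnerProductSpace

variable {F : Type*} [NormedAddCommGroup F] [InnerProductSpace ℝ F]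

/-- Seen from `-(3/4) • ξ`, the points outside the unit ball of a thin annulus of inner radius
`1/4` lie in a narrow cone around the direction `ξ`. -/
theorem norm_inv_norm_smul_sub_sq_le {ξ x : F} (hξ : ‖ξ‖ = 1) {η : ℝ}
    (hη1 : η ≤ 1 / 2) (hx₁ : 1 / 4 ≤ ‖x‖) (hx₂ : ‖x‖ < (1 + η) / 4)
    (hout : 1 ≤ ‖-(3 / 4 : ℝ) • ξ - x‖) :
    ‖‖x‖⁻¹ • x - ξ‖ ^ 2 ≤ 3 * η := by
  have hx : 0 < ‖x‖ := by linarith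
  have hout_sq : 1 ≤ 9 / 16 + 3 / 2 * ⟪x, ξ⟫ + ‖x‖ ^ 2 := by
    have : ‖-(3 / 4 : ℝ) • ξ - x‖ ^ 2 = 9 / 16 + 3 / 2 * ⟪x, ξ⟫ + ‖x‖ ^ 2 := by
      rw [norm_sub_sq_real, norm_smul, real_inner_smul_left, real_inner_comm, hξ, norm_neg,
        Real.norm_of_nonneg (by norm_num)]
      ring
    nlinarith
  have hinner : (1 - 3 / 2 * η) * ‖x‖ ≤ ⟪x, ξ⟫ := by
    nlinarith [mul_nonneg (by linarith : (0:ℝ) ≤ (1 + η) / 4 - ‖x‖)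
      (by linarith : (0:ℝ) ≤ ‖x‖ + (1 + η) / 4 + 3 / 2 - 9 / 4 * η)]
  have hdir : ‖‖x‖⁻¹ • x - ξ‖ ^ 2 = 2 - 2 * (⟪x, ξ⟫ / ‖x‖) := by
    rw [norm_sub_sq_real, norm_smul, real_inner_smul_left, norm_inv, norm_norm, hξ,
      inv_mul_cancel₀ hx.ne']
    ring
  rw [hdir]
  linarith [(le_div_iff₀ hx).2 hinner]

theorem sq_div_two_div_pow_le_mul_homogeneousKernel {Ω : F → ℝ} {ξ : F} (hξ : ‖ξ‖ = 1)
    {δ : ℝ} (hδ : 0 < δ)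
    (hΩδ : ∀ ⦃u⦄, u ∈ sphere (0 : F) 1 → dist u ξ < δ → dist (Ω u) (Ω ξ) < |Ω ξ| / 2)
    {η : ℝ} (hη1 : η ≤ 1 / 2) (hηδ : 3 * η < δ ^ 2) (k : ℕ) {ζ : F}
    (hζ : ζ ∈ (ball (-(3 / 4 : ℝ) • ξ) ((1 + η) / 4) \ ball (-(3 / 4 : ℝ) • ξ) (1 / 4)) \
      ball 0 1) :
    Ω ξ ^ 2 / 2 / ((1 + η) / 4) ^ k ≤ Ω ξ * homogeneousKernel Ω k (-(3 / 4 : ℝ) • ξ - ζ) := by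
  obtain ⟨⟨hζt, hζs⟩, hζ1⟩ := hζ
  set x := -(3 / 4 : ℝ) • ξ - ζ
  rw [mem_ball, dist_eq_norm, norm_sub_rev] at hζt hζs
  rw [not_lt] at hζs
  have hout : 1 ≤ ‖-(3 / 4 : ℝ) • ξ - x‖ := by simpa [x] using hζ1
  have hdist : dist (‖x‖⁻¹ • x) ξ < δ := by
    refine lt_of_pow_lt_pow_left₀ 2 hδ.le ?_
    rw [dist_eq_norm]
    linarith [norm_inv_norm_smul_sub_sq_le hξ hη1 hζs hζt hout]
  have hx : 0 < ‖x‖ := by linarith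
  have hmem : ‖x‖⁻¹ • x ∈ sphere (0 : F) 1 := by
    simp [norm_smul, hx.ne']
  have hΩ := sq_div_two_le_mul_of_abs_sub_lt (hΩδ hmem hdist)
  rw [homogeneousKernel, mul_div_assoc']
  exact div_le_div₀ ((by positivity : (0 : ℝ) ≤ Ω ξ ^ 2 / 2).trans hΩ) hΩ (by positivity)
    (pow_le_pow_left₀ hx.le hζt.le _)

variable [FiniteDimensional ℝ F] [MeasurableSpace F] [BorelSpace F] (μ : Measure F)
  [μ.IsAddHaarMeasure]

theorem exists_annulus_le_abs_setIntegral_of_integral_toSphere_eq_zero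
    (h2 : 2 ≤ finrank ℝ F) {Ω : F → ℝ} (hΩ : ContinuousOn Ω (sphere 0 1)) {ξ₀ : F}
    (hξ₀ : ‖ξ₀‖ = 1) (hΩξ₀ : Ω ξ₀ ≠ 0) (hI : ∫ ω, Ω ω ∂μ.toSphere = 0) :
    ∃ z₀ ∈ ball (0 : F) 1, ∃ s t : ℝ, 0 < s ∧ s < t ∧ ∃ c : ℝ, 0 < c ∧
      c ≤ |∫ ζ in ball (0 : F) 1 ∩ (ball z₀ t \ ball z₀ s),
        homogeneousKernel Ω (finrank ℝ F - 2) (z₀ - ζ) ∂μ| := by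
  obtain ⟨δ, hδ, hΩδ⟩ := Metric.continuousWithinAt_iff.1
    (hΩ ξ₀ (mem_sphere_zero_iff_norm.2 hξ₀)) (|Ω ξ₀| / 2) (by positivity)
  set η := min (δ ^ 2 / 4) (1 / 2)
  have hη0 : 0 < η := lt_min (by positivity) (by norm_num)
  set z₀ : F := -(3 / 4 : ℝ) • ξ₀
  set t := (1 + η) / 4 with ht
  have hst : 1 / 4 < t := by linarith
  set A := ball z₀ t \ ball z₀ (1 / 4)
  set R := A \ ball 0 1
  set κ := Ω ξ₀ ^ 2 / 2 / t ^ (finrank ℝ F - 2)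
  have hκ : ∀ ζ ∈ R, κ ≤ Ω ξ₀ * homogeneousKernel Ω (finrank ℝ F - 2) (z₀ - ζ) :=
    fun ζ hζ => sq_div_two_div_pow_le_mul_homogeneousKernel hξ₀ hδ hΩδ (min_le_right _ _)
      (by nlinarith [min_le_left (δ ^ 2 / 4) (1 / 2)]) _ hζ
  have hRA : R ⊆ A := sdiff_subset
  have hR : MeasurableSet R := (measurableSet_ball.diff measurableSet_ball).diff measurableSet_ball
  have hμR : μ R ≠ ⊤ := ((measure_mono (hRA.trans sdiff_subset)).trans_lt measure_ball_lt_top).ne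
  have hμR_pos : 0 < μ.real R := ENNReal.toReal_pos (measure_ball_diff_ball_diff_ball_pos μ hξ₀
    (by norm_num) hst (by linarith)).ne' hμR
  have hint := (integrableOn_ball_diff_ball_homogeneousKernel_comp_sub_left μ hΩ
    (finrank ℝ F - 2) z₀ (s := 1 / 4) (by norm_num) t).const_mul (Ω ξ₀)
  have h0 : ∫ ζ in A, Ω ξ₀ * homogeneousKernel Ω (finrank ℝ F - 2) (z₀ - ζ) ∂μ = 0 := by
    rw [integral_const_mul, setIntegral_ball_diff_ball_comp_sub_left,
      setIntegral_ball_diff_ball_homogeneousKernel μ h2 Ω (by norm_num) (by linarith), hI,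
      mul_zero, mul_zero]
  have hbound := le_abs_setIntegral_sdiff_of_setIntegral_eq_zero hR hRA hμR hint h0 hκ
  rw [sdiff_sdiff_right_self, integral_const_mul, abs_mul] at hbound
  refine ⟨z₀, ?_, 1 / 4, t, by norm_num, hst, κ * μ.real R / |Ω ξ₀|, by positivity, ?_⟩
  · rw [mem_ball_zero_iff, norm_smul, hξ₀, mul_one, norm_neg, Real.norm_of_nonneg (by norm_num)]
    norm_num
  · rw [div_le_iff₀' (abs_pos.2 hΩξ₀), inter_comm]
    exact hbound

theorem exists_annulus_le_abs_setIntegral (h2 : 2 ≤ finrank ℝ F) {Ω : F → ℝ}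
    (hΩ : ContinuousOn Ω (sphere 0 1)) (hne : ∃ ξ ∈ sphere (0 : F) 1, Ω ξ ≠ 0) :
    ∃ z₀ ∈ ball (0 : F) 1, ∃ s t : ℝ, 0 < s ∧ s < t ∧ ∃ c : ℝ, 0 < c ∧
      c ≤ |∫ ζ in ball (0 : F) 1 ∩ (ball z₀ t \ ball z₀ s),
        homogeneousKernel Ω (finrank ℝ F - 2) (z₀ - ζ) ∂μ| := by
  by_cases hI : ∫ ω, Ω ω ∂μ.toSphere = 0
  · obtain ⟨ξ₀, hξ₀, hΩξ₀⟩ := hne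
    exact exists_annulus_le_abs_setIntegral_of_integral_toSphere_eq_zero μ h2 hΩ
      (mem_sphere_zero_iff_norm.1 hξ₀) hΩξ₀ hI
  · refine ⟨0, mem_ball_self one_pos, 1 / 2, 1, by norm_num, by norm_num,
      |3 / 8 * ∫ ω, Ω ω ∂μ.toSphere|, by positivity, le_of_eq ?_⟩
    rw [inter_eq_self_of_subset_right Set.sdiff_subset, setIntegral_ball_diff_ball_comp_sub_left,
      setIntegral_ball_diff_ball_homogeneousKernel μ h2 Ω (by norm_num) (by norm_num)]
    norm_num

end InnerProductSpace

theorem exists_annulus_with_large_potential_general (d : ℕ) (hd : 3 ≤ d)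
    (Ω : EuclideanSpace ℝ (Fin d) → ℝ)
    (hcont : ContinuousOn Ω (sphere (0 : EuclideanSpace ℝ (Fin d)) 1))
    (hne : ∃ ξ ∈ sphere (0 : EuclideanSpace ℝ (Fin d)) 1, Ω ξ ≠ 0)
    (K : EuclideanSpace ℝ (Fin d) → ℝ)
    (hK : ∀ x, K x = Ω (‖x‖⁻¹ • x) / ‖x‖ ^ (d - 2)) :
    ∃ z₀ ∈ ball (0 : EuclideanSpace ℝ (Fin d)) 1, ∃ s t : ℝ, 0 < s ∧ s < t ∧ ∃ c : ℝ, 0 < c ∧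
      c ≤ |∫ ζ in ball (0 : EuclideanSpace ℝ (Fin d)) 1 ∩ (ball z₀ t \ ball z₀ s),
            K (z₀ - ζ)| := by
  have hdim : finrank ℝ (EuclideanSpace ℝ (Fin d)) = d := finrank_euclideanSpace_fin
  obtain rfl : K = homogeneousKernel Ω (finrank ℝ (EuclideanSpace ℝ (Fin d)) - 2) := by
    ext x
    rw [hK, hdim, homogeneousKernel]
  exact exists_annulus_le_abs_setIntegral volume (by omega) hcont hne

/-- For `d ≥ 3` and a continuous mean-zero function `Ω` on `S^{d-1}` that does not vanish
identically, with kernel `K x = Ω(x/|x|)/|x|^{d-2}`: there exist a point `z₀` in the unit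
ball, radii `0 < s < t`, and `c > 0` such that
`|∫_{B(0,1) ∩ (B(z₀,t) \ B(z₀,s))} K(z₀ − ζ) dm_d(ζ)| ≥ c`. -/
theorem exists_annulus_with_large_potential (d : ℕ) (hd : 3 ≤ d)
    (Ω : EuclideanSpace ℝ (Fin d) → ℝ)
    (hcont : ContinuousOn Ω (sphere (0 : EuclideanSpace ℝ (Fin d)) 1))
    (hmean : ∫ ξ in sphere (0 : EuclideanSpace ℝ (Fin d)) 1, Ω ξ ∂(μH[(d:ℝ) - 1]) = 0)
    (hne : ∃ ξ ∈ sphere (0 : EuclideanSpace ℝ (Fin d)) 1, Ω ξ ≠ 0)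
    (K : EuclideanSpace ℝ (Fin d) → ℝ)
    (hK : ∀ x, K x = Ω (‖x‖⁻¹ • x) / ‖x‖ ^ (d - 2)) :
    ∃ z₀ ∈ ball (0 : EuclideanSpace ℝ (Fin d)) 1, ∃ s t : ℝ, 0 < s ∧ s < t ∧ ∃ c : ℝ, 0 < c ∧
      c ≤ |∫ ζ in ball (0 : EuclideanSpace ℝ (Fin d)) 1 ∩ (ball z₀ t \ ball z₀ s),
            K (z₀ - ζ)| :=
  exists_annulus_with_large_potential_general d hd Ω hcont hne K hK
end
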